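/- Let W be a Worm, with associated pre-Worms W_in = Z(X_in, θ|_{X_in}) and W_out = Z(X_out, θ|_{X_out}), where X_in = θ^{-1}(I°) and X_out = θ^{-1}(J°). Then the domain W_in has simple boundary in W_out: every holomorphic map φ: 𝔻 → W_out whose image is contained in the closure of W_in and meets ∂W_in has image entirely contained in ∂W_in. -/

import Mathlib

open scoped Manifold Topology
open Set Metric Filter

noncomputable section

/-- The Poincaré (hyperbolic) distance between two points of the unit disc. -/
def poincareDist (a b : ℂ) : ℝ :=
  (1 / 2) * Real.log ((1 + ‖(a - b) / (1 - (starRingEnd ℂ) a * b)‖) /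
    (1 - ‖(a - b) / (1 - (starRingEnd ℂ) a * b)‖))

variable {E : Type*} [NormedAddCommGroup E] [NormedSpace ℂ E]
  {H : Type*} [TopologicalSpace H]
  {M : Type*} [TopologicalSpace M] [ChartedSpace H M]

/-- A holomorphic disc in a subset `Ω` of a complex manifold `M`. -/
def IsHolDiscOn (I : ModelWithCorners ℂ E H) (Ω : Set M) (φ : ℂ → M) : Prop :=
  MDifferentiableOn 𝓘(ℂ) I φ (ball (0 : ℂ) 1) ∧ ∀ ζ ∈ ball (0 : ℂ) 1, φ ζ ∈ Ω

/-- The Kobayashi pseudodistance of the (open) subset `Ω` of the complex manifold `M`,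
defined via chains of holomorphic discs. -/
def kobayashiDistOn (I : ModelWithCorners ℂ E H) (Ω : Set M) (x y : M) : ℝ :=
  sInf {r : ℝ | ∃ (n : ℕ) (φ : ℕ → ℂ → M) (a b : ℕ → ℂ),
    (∀ i ≤ n, IsHolDiscOn I Ω (φ i) ∧ a i ∈ ball (0 : ℂ) 1 ∧ b i ∈ ball (0 : ℂ) 1) ∧
    φ 0 (a 0) = x ∧ φ n (b n) = y ∧
    (∀ i < n, φ i (b i) = φ (i + 1) (a (i + 1))) ∧
    r = ∑ i ∈ Finset.range (n + 1), poincareDist (a i) (b i)}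

/-- The Kobayashi pseudodistance of the complex manifold `M`. -/
def kobayashiDist (I : ModelWithCorners ℂ E H) (x y : M) : ℝ :=
  kobayashiDistOn I Set.univ x y

/-- The Kobayashi--Royden pseudometric of the subset `Ω` of the complex manifold `M`, at the
point `p`, evaluated on the tangent vector represented by `v : E` in the chart `extChartAt I p`. -/
def kobayashiRoydenOn (I : ModelWithCorners ℂ E H) (Ω : Set M) (p : M) (v : E) : ℝ :=
  sInf {α : ℝ | 0 < α ∧ ∃ φ : ℂ → M, IsHolDiscOn I Ω φ ∧ φ 0 = p ∧
    α • deriv (fun ζ => extChartAt I p (φ ζ)) 0 = v}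

/-- The Gromov product of `x` and `y` with respect to `o`. -/
def gromovProd {α : Type*} (d : α → α → ℝ) (o x y : α) : ℝ :=
  (d x o + d y o - d x y) / 2

/-- A "distance function" `d` is Gromov hyperbolic on the set `Ω` if it is `δ`-hyperbolic
for some `δ ≥ 0`. -/
def IsGromovHyperbolicOn {α : Type*} (d : α → α → ℝ) (Ω : Set α) : Prop :=
  ∃ δ : ℝ, 0 ≤ δ ∧ ∀ o ∈ Ω, ∀ x ∈ Ω, ∀ y ∈ Ω, ∀ z ∈ Ω,
    min (gromovProd d o x z) (gromovProd d o y z) - δ ≤ gromovProd d o x y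

/-- `d` restricted to `Ω` is a distance, and `(Ω, d)` is Cauchy-complete. -/
def IsCompleteDistanceOn {α : Type*} (d : α → α → ℝ) (Ω : Set α) : Prop :=
  (∀ x ∈ Ω, ∀ y ∈ Ω, (d x y = 0 ↔ x = y)) ∧
  (∀ x ∈ Ω, ∀ y ∈ Ω, 0 ≤ d x y ∧ d x y = d y x) ∧
  (∀ x ∈ Ω, ∀ y ∈ Ω, ∀ z ∈ Ω, d x z ≤ d x y + d y z) ∧
  (∀ u : ℕ → α, (∀ n, u n ∈ Ω) →
    (∀ ε : ℝ, 0 < ε → ∃ N : ℕ, ∀ m ≥ N, ∀ n ≥ N, d (u m) (u n) < ε) →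
    ∃ x ∈ Ω, ∀ ε : ℝ, 0 < ε → ∃ N : ℕ, ∀ n ≥ N, d (u n) x < ε)

/-- The (open) subset `Ω` of the complex manifold `M` is complete Kobayashi hyperbolic. -/
def IsCompleteKobayashiHyperbolicOn (I : ModelWithCorners ℂ E H) (Ω : Set M) : Prop :=
  IsCompleteDistanceOn (kobayashiDistOn I Ω) Ω

/-- Laplacian of a function `u : ℂ → ℝ` at a point. -/
def laplacianAt (u : ℂ → ℝ) (z : ℂ) : ℝ :=
  fderiv ℝ (fun w => fderiv ℝ u w 1) z 1 +
    fderiv ℝ (fun w => fderiv ℝ u w Complex.I) z Complex.I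

/-- `u` is harmonic on the set `s ⊆ ℂ`. -/
def HarmonicOnSet (u : ℂ → ℝ) (s : Set ℂ) : Prop :=
  ContDiffOn ℝ 2 u s ∧ ∀ z ∈ s, laplacianAt u z = 0

variable {Y : Type*} [TopologicalSpace Y] [ChartedSpace ℂ Y]

/-- A real valued function on a Riemann surface is harmonic if it is harmonic in every
holomorphic chart. -/
def MHarmonic (θ : Y → ℝ) : Prop :=
  ∀ p : Y, HarmonicOnSet (fun z => θ ((extChartAt 𝓘(ℂ) p).symm z)) (extChartAt 𝓘(ℂ) p).target

/-- The differential of `θ : Y → ℝ` read in the chart at `z`; `θ` has a critical point at `z`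
iff this vanishes. -/
def chartDeriv (θ : Y → ℝ) (z : Y) : ℂ →L[ℝ] ℝ :=
  fderiv ℝ (fun w => θ ((extChartAt 𝓘(ℂ) z).symm w)) (extChartAt 𝓘(ℂ) z z)

/-- The Levi form of `ρ : E → ℝ` at `x` in the direction `v`, computed as one quarter of the
Laplacian at `ζ = 0` of `ζ ↦ ρ (x + ζ v)`. -/
def leviForm (ρ : E → ℝ) (x v : E) : ℝ :=
  (1 / 4) * laplacianAt (fun ζ : ℂ => ρ (x + ζ • v)) 0

/-- `v` is a complex tangent vector to the level set of `ρ` at `x`. -/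
def IsComplexTangentAt (ρ : E → ℝ) (x v : E) : Prop :=
  fderiv ℝ ρ x v = 0 ∧ fderiv ℝ ρ x (Complex.I • v) = 0

end

lemma clm_decomp {X : Type*} [NormedAddCommGroup X] [NormedSpace ℝ X]
    (T : ℂ →L[ℝ] X) (w : ℂ) : T w = w.re • T 1 + w.im • T Complex.I := by
  have hw : w = w.re • (1:ℂ) + w.im • Complex.I := by
    simp [Complex.real_smul, Complex.re_add_im]
  conv_lhs => rw [hw]
  rw [map_add, map_smul, map_smul]

lemma grad_differentiable {U : ℂ → ℝ} {Ω : Set ℂ} (hΩ : IsOpen Ω)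
    (h1 : ContDiffOn ℝ 2 U Ω) (h2 : ∀ z ∈ Ω, laplacianAt U z = 0) {z : ℂ} (hz : z ∈ Ω) :
    DifferentiableAt ℂ
      (fun w => (fderiv ℝ U w 1 : ℂ) - Complex.I • (fderiv ℝ U w Complex.I : ℂ)) z := by
  have hUd : DifferentiableOn ℝ U Ω := h1.differentiableOn two_ne_zero
  have hDU : ContDiffOn ℝ 1 (fderiv ℝ U) Ω := h1.fderiv_of_isOpen hΩ le_rfl
  have hDUd : DifferentiableAt ℝ (fderiv ℝ U) z :=
    (hDU.differentiableOn one_ne_zero z hz).differentiableAt (hΩ.mem_nhds hz)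
  set B := fderiv ℝ (fderiv ℝ U) z with hBdef
  have hB : HasFDerivAt (fderiv ℝ U) B z := hDUd.hasFDerivAt
  have hev : ∀ᶠ y in 𝓝 z, HasFDerivAt U (fderiv ℝ U y) y := by
    filter_upwards [hΩ.mem_nhds hz] with y hy
    exact ((hUd y hy).differentiableAt (hΩ.mem_nhds hy)).hasFDerivAt
  have hsym : ∀ v w : ℂ, B v w = B w v :=
    second_derivative_symmetric_of_eventually hev hB
  -- the partial-derivative maps
  have hga : ∀ a : ℂ, HasFDerivAt (fun w => fderiv ℝ U w a)
      ((ContinuousLinearMap.apply ℝ ℝ a).comp B) z := fun a =>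
    (ContinuousLinearMap.apply ℝ ℝ a).hasFDerivAt.comp z hB
  have hlap : B 1 1 + B Complex.I Complex.I = 0 := by
    have h := h2 z hz
    rw [laplacianAt] at h
    rw [(hga 1).fderiv, (hga Complex.I).fderiv] at h
    simpa using h
  -- real derivative of f
  have h1c : HasFDerivAt (fun w => ((fderiv ℝ U w 1 : ℝ) : ℂ))
      (Complex.ofRealCLM.comp ((ContinuousLinearMap.apply ℝ ℝ 1).comp B)) z :=
    Complex.ofRealCLM.hasFDerivAt.comp z (hga 1)
  have h2c : HasFDerivAt (fun w => Complex.I • ((fderiv ℝ U w Complex.I : ℝ) : ℂ))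
      (Complex.I • (Complex.ofRealCLM.comp ((ContinuousLinearMap.apply ℝ ℝ Complex.I).comp B))) z :=
    (Complex.ofRealCLM.hasFDerivAt.comp z (hga Complex.I)).const_smul Complex.I
  have hf := h1c.sub h2c
  set d : ℂ := (B 1 1 : ℂ) - Complex.I • (B 1 Complex.I : ℂ) with hd
  refine ⟨(1 : ℂ →L[ℂ] ℂ).smulRight d, hasFDerivAt_of_restrictScalars ℝ hf ?_⟩
  apply ContinuousLinearMap.ext
  intro w
  have hBw : B w = w.re • B 1 + w.im • B Complex.I := clm_decomp B w
  simp only [ContinuousLinearMap.coe_restrictScalars', ContinuousLinearMap.smulRight_apply,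
    ContinuousLinearMap.one_apply, ContinuousLinearMap.coe_sub', Pi.sub_apply,
    ContinuousLinearMap.coe_smul', Pi.smul_apply, ContinuousLinearMap.coe_comp',
    Function.comp_apply, ContinuousLinearMap.apply_apply, Complex.ofRealCLM_apply]
  rw [hBw]
  have h1I : B Complex.I 1 = B 1 Complex.I := hsym _ _
  have hII : B Complex.I Complex.I = - B 1 1 := by linarith
  simp only [ContinuousLinearMap.add_apply, ContinuousLinearMap.coe_smul',
    Pi.smul_apply, h1I, hII, hd]
  apply Complex.ext <;>
    simp [Complex.smul_re, Complex.smul_im, smul_eq_mul] <;> ring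

lemma fderiv_eq_re_mul {U : ℂ → ℝ} {z w : ℂ} :
    (w * ((fderiv ℝ U z 1 : ℂ) - Complex.I • (fderiv ℝ U z Complex.I : ℂ))).re
      = fderiv ℝ U z w := by
  rw [clm_decomp (fderiv ℝ U z) w]
  simp only [Complex.mul_re, Complex.sub_re, Complex.sub_im, Complex.smul_re,
    Complex.smul_im, Complex.I_re, Complex.I_im, Complex.ofReal_re, Complex.ofReal_im,
    Complex.mul_im, smul_eq_mul]
  ring

lemma exists_conjugate {U : ℂ → ℝ} {Ω : Set ℂ} (hΩ : IsOpen Ω)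
    (h1 : ContDiffOn ℝ 2 U Ω) (h2 : ∀ z ∈ Ω, laplacianAt U z = 0) {z₀ : ℂ} (hz : z₀ ∈ Ω) :
    ∃ r : ℝ, 0 < r ∧ ball z₀ r ⊆ Ω ∧ ∃ H : ℂ → ℂ,
      (∀ z ∈ ball z₀ r, DifferentiableAt ℂ H z) ∧ ∀ z ∈ ball z₀ r, (H z).re = U z := by
  set f : ℂ → ℂ := fun w => (fderiv ℝ U w 1 : ℂ) - Complex.I • (fderiv ℝ U w Complex.I : ℂ)
    with hfdef
  obtain ⟨ε, hε, hball⟩ := Metric.isOpen_iff.1 hΩ z₀ hz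
  set R : NNReal := ⟨ε/2, by positivity⟩ with hRdef
  have hRpos : 0 < R := by
    rw [hRdef]; exact_mod_cast half_pos hε
  have hcb : closedBall z₀ (R:ℝ) ⊆ Ω := by
    refine subset_trans ?_ hball
    intro x hx
    rw [mem_closedBall] at hx
    rw [mem_ball]
    calc dist x z₀ ≤ ε/2 := hx
      _ < ε := half_lt_self hε
  have hfd : DifferentiableOn ℂ f (closedBall z₀ (R:ℝ)) := fun z hzb =>
    (grad_differentiable hΩ h1 h2 (hcb hzb)).differentiableWithinAt
  have hp : HasFPowerSeriesOnBall f (cauchyPowerSeries f z₀ R) z₀ R :=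
    hfd.hasFPowerSeriesOnBall hRpos
  set p := cauchyPowerSeries f z₀ R with hpdef
  set r : NNReal := R / 2 with hrdef
  have hrpos : 0 < r := by positivity
  have hrR : (r : ENNReal) < R := by
    rw [hrdef]
    exact_mod_cast NNReal.half_lt_self hRpos.ne'
  have hrrad : (r : ENNReal) < p.radius := lt_of_lt_of_le hrR hp.r_le
  have hsum : Summable fun n => ‖p n‖ * (r:ℝ) ^ n := p.summable_norm_mul_pow hrrad
  set F : ℂ → ℂ := fun z => ∑' n : ℕ, (p.coeff n / (n + 1)) * (z - z₀) ^ (n + 1) with hFdef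
  have hgd : ∀ (n : ℕ) (z : ℂ), HasDerivAt (fun z => (p.coeff n / (n + 1)) * (z - z₀) ^ (n + 1))
      (p.coeff n * (z - z₀) ^ n) z := by
    intro n z
    have h := (((hasDerivAt_id z).sub_const z₀).pow (n + 1)).const_mul (p.coeff n / (n + 1))
    refine h.congr_deriv ?_
    have : ((n : ℂ) + 1) ≠ 0 := Nat.cast_add_one_ne_zero n
    simp only [id, Nat.add_sub_cancel]
    push_cast
    field_simp
  have hbound : ∀ (n : ℕ), ∀ z ∈ ball z₀ (r:ℝ), ‖p.coeff n * (z - z₀) ^ n‖ ≤ ‖p n‖ * (r:ℝ) ^ n := by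
    intro n z hzb
    rw [norm_mul, norm_pow, p.norm_apply_eq_norm_coef]
    gcongr
    exact (mem_ball_iff_norm.1 hzb).le
  have hF0 : Summable fun n : ℕ => (p.coeff n / (n + 1)) * (z₀ - z₀) ^ (n + 1) := by
    apply summable_of_ne_finset_zero (s := ∅)
    intro n _
    simp
  have hFd : ∀ z ∈ ball z₀ (r:ℝ), HasDerivAt F (f z) z := by
    intro z hzb
    have h := hasDerivAt_tsum_of_isPreconnected hsum isOpen_ball
      (convex_ball z₀ (r:ℝ)).isPreconnected (fun n y _ => hgd n y) hbound
      (mem_ball_self (by exact_mod_cast hrpos)) hF0 hzb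
    have hzE : z - z₀ ∈ Metric.eball (0:ℂ) R := by
      rw [Metric.mem_eball, edist_eq_enorm_sub, sub_zero]
      calc (‖z - z₀‖₊ : ENNReal) < r := by
            rw [mem_ball_iff_norm] at hzb
            exact_mod_cast hzb
        _ < R := hrR
    have hs := hp.hasSum hzE
    rw [add_sub_cancel] at hs
    have : (fun n : ℕ => p n fun _ => z - z₀) = fun n => p.coeff n * (z - z₀) ^ n := by
      funext n
      rw [p.apply_eq_pow_smul_coeff, smul_eq_mul]
      ring
    rw [this] at hs
    exact hs.tsum_eq ▸ h
  -- U - Re F is constant on the ball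
  have hrediff : ∀ z ∈ ball z₀ (r:ℝ),
      HasFDerivAt (fun z => U z - (F z).re) (0 : ℂ →L[ℝ] ℝ) z := by
    intro z hzb
    have hzΩ : z ∈ Ω := hcb (ball_subset_closedBall (ball_subset_ball (by exact_mod_cast NNReal.half_le_self R : (r:ℝ) ≤ R) hzb))
    have hU : HasFDerivAt U (fderiv ℝ U z) z :=
      ((h1.differentiableOn two_ne_zero z hzΩ).differentiableAt (hΩ.mem_nhds hzΩ)).hasFDerivAt
    have hFre : HasFDerivAt (fun z => (F z).re)
        (Complex.reCLM.comp (((1 : ℂ →L[ℂ] ℂ).smulRight (f z)).restrictScalars ℝ)) z :=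
      Complex.reCLM.hasFDerivAt.comp z (((hFd z hzb).hasFDerivAt).restrictScalars ℝ)
    have heq : Complex.reCLM.comp (((1 : ℂ →L[ℂ] ℂ).smulRight (f z)).restrictScalars ℝ)
        = fderiv ℝ U z := by
      apply ContinuousLinearMap.ext
      intro w
      simp only [ContinuousLinearMap.coe_comp', Function.comp_apply,
        ContinuousLinearMap.coe_restrictScalars', ContinuousLinearMap.smulRight_apply,
        ContinuousLinearMap.one_apply, Complex.reCLM_apply, smul_eq_mul]
      exact fderiv_eq_re_mul
    have := hU.sub hFre
    rw [heq] at this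
    rw [sub_self] at this
    exact this
  have hconst : ∀ z ∈ ball z₀ (r:ℝ), U z - (F z).re = U z₀ - (F z₀).re := by
    intro z hzb
    refine (convex_ball z₀ (r:ℝ)).is_const_of_fderivWithin_eq_zero (𝕜 := ℝ)
      (fun y hy => ((hrediff y hy).differentiableAt).differentiableWithinAt) ?_ hzb
      (mem_ball_self (by exact_mod_cast hrpos))
    intro y hy
    rw [fderivWithin_of_isOpen isOpen_ball hy, (hrediff y hy).fderiv]
  refine ⟨r, by exact_mod_cast hrpos,
    fun x hx => hcb (ball_subset_closedBall (ball_subset_ball (by exact_mod_cast NNReal.half_le_self R) hx)),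
    fun z => F z + ((U z₀ - (F z₀).re : ℝ) : ℂ), ?_, ?_⟩
  · intro z hzb
    exact ((hFd z hzb).differentiableAt).add_const _
  · intro z hzb
    have := hconst z hzb
    simp only [Complex.add_re, Complex.ofReal_re]
    linarith

lemma re_loc_const {G : ℂ → ℂ} {ζ₁ : ℂ}
    (hG : ∀ᶠ ζ in 𝓝 ζ₁, DifferentiableAt ℂ G ζ)
    (h : IsLocalMax (fun ζ => (G ζ).re) ζ₁ ∨ IsLocalMin (fun ζ => (G ζ).re) ζ₁) :
    ∀ᶠ ζ in 𝓝 ζ₁, (G ζ).re = (G ζ₁).re := by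
  have main : ∀ G' : ℂ → ℂ, (∀ᶠ ζ in 𝓝 ζ₁, DifferentiableAt ℂ G' ζ) →
      IsLocalMax (fun ζ => (G' ζ).re) ζ₁ → ∀ᶠ ζ in 𝓝 ζ₁, (G' ζ).re = (G' ζ₁).re := by
    intro G' hG' hmax
    have hd : ∀ᶠ ζ in 𝓝 ζ₁, DifferentiableAt ℂ (fun ζ => Complex.exp (G' ζ)) ζ := by
      filter_upwards [hG'] with ζ h using h.cexp
    have hm : IsLocalMax (norm ∘ fun ζ => Complex.exp (G' ζ)) ζ₁ := by
      have : ∀ᶠ ζ in 𝓝 ζ₁, (G' ζ).re ≤ (G' ζ₁).re := hmax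
      filter_upwards [this] with ζ h
      simp only [Function.comp_apply, Complex.norm_exp]
      exact Real.exp_le_exp.2 h
    have := Complex.eventually_eq_of_isLocalMax_norm hd hm
    filter_upwards [this] with ζ h
    have : ‖Complex.exp (G' ζ)‖ = ‖Complex.exp (G' ζ₁)‖ := by rw [h]
    rw [Complex.norm_exp, Complex.norm_exp] at this
    exact Real.exp_eq_exp.1 this
  rcases h with hmax | hmin
  · exact main G hG hmax
  · have hneg := main (fun ζ => -G ζ) (by filter_upwards [hG] with ζ h using h.neg)
      (by
        have : IsLocalMax (fun ζ => -(G ζ).re) ζ₁ := hmin.neg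
        simpa [Complex.neg_re] using this)
    filter_upwards [hneg] with ζ h
    simp only [Complex.neg_re, neg_inj] at h
    exact h

lemma MHarmonic.continuous {Y : Type*} [TopologicalSpace Y] [ChartedSpace ℂ Y]
    {θ : Y → ℝ} (hθ : MHarmonic θ) : Continuous θ := by
  rw [continuous_iff_continuousAt]
  intro p
  have h1 : ContinuousAt (fun z => θ ((extChartAt 𝓘(ℂ) p).symm z)) (extChartAt 𝓘(ℂ) p p) :=
    (hθ p).1.continuousOn.continuousAt
      ((isOpen_extChartAt_target (I := 𝓘(ℂ)) p).mem_nhds (mem_extChartAt_target (I := 𝓘(ℂ)) p))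
  have h2 : ContinuousAt (extChartAt 𝓘(ℂ) p) p := continuousAt_extChartAt (I := 𝓘(ℂ)) p
  refine (h1.comp h2).congr ?_
  filter_upwards [(isOpen_extChartAt_source (I := 𝓘(ℂ)) p).mem_nhds (mem_extChartAt_source (I := 𝓘(ℂ)) p)] with
    z hz
  simp only [Function.comp_apply]
  rw [(extChartAt 𝓘(ℂ) p).left_inv hz]

theorem Win_has_simple_boundary_in_Wout
    -- `Y` is an open (i.e. non-compact) Riemann surface
    {Y : Type*} [TopologicalSpace Y] [ChartedSpace ℂ Y] [IsManifold 𝓘(ℂ) (⊤ : WithTop ℕ∞) Y]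
    [ConnectedSpace Y] [NoncompactSpace Y]
    -- a harmonic "angle" function
    (θ : Y → ℝ) (hθ : MHarmonic θ)
    -- two compact intervals `I ⊆ J°`
    (aI bI aJ bJ : ℝ) (haIbI : aI ≤ bI) (haJbJ : aJ ≤ bJ)
    (I J : Set ℝ) (hI : I = Set.Icc aI bI) (hJ : J = Set.Icc aJ bJ)
    (hIJ : I ⊆ interior J)
    -- the auxiliary function `η`
    (η : ℝ → ℝ) (hη0 : ∀ t, 0 ≤ η t) (hηsm : ContDiff ℝ (⊤ : ℕ∞) η)
    (hηI : ∀ t ∈ I, η t = 0)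
    (hηan : AnalyticOnNhd ℝ η Iᶜ)
    (hηconv : ∀ t ∉ I, 0 < deriv (deriv η) t)
    (hJη : J = {t : ℝ | η t ≤ 1})
    -- the Worm
    (W : Set (Y × ℂ))
    (hW : W = {p : Y × ℂ |
      Complex.normSq (p.2 - Complex.exp (Complex.I * (θ p.1 : ℂ))) < 1 - η (θ p.1)})
    -- `θ` has no critical points where `θ z ∈ ∂I ∪ ∂J`
    (hcrit : ∀ z : Y, θ z ∈ frontier I ∪ frontier J → chartDeriv θ z ≠ 0)
    -- `θ ⁻¹ J` is compact
    (hcpt : IsCompact (θ ⁻¹' J)) :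
    -- `W_in` has simple boundary in `W_out`
    ∀ Win Wout : Set (Y × ℂ),
      Win = {p : Y × ℂ | θ p.1 ∈ interior I ∧
        0 < (p.2 * Complex.exp (-(Complex.I * (θ p.1 : ℂ)))).re} →
      Wout = {p : Y × ℂ | θ p.1 ∈ interior J ∧
        0 < (p.2 * Complex.exp (-(Complex.I * (θ p.1 : ℂ)))).re} →
      ∀ φ : ℂ → Y × ℂ,
        -- `φ : 𝔻 → W_out` holomorphic
        MDifferentiableOn 𝓘(ℂ) (𝓘(ℂ).prod 𝓘(ℂ)) φ (ball (0 : ℂ) 1) →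
        (∀ ζ ∈ ball (0 : ℂ) 1, φ ζ ∈ Wout) →
        -- with image contained in the closure of `W_in` and meeting `∂W_in`
        (∀ ζ ∈ ball (0 : ℂ) 1, φ ζ ∈ closure Win) →
        (∃ ζ ∈ ball (0 : ℂ) 1, φ ζ ∈ frontier Win) →
        -- has image entirely contained in `∂W_in`
        ∀ ζ ∈ ball (0 : ℂ) 1, φ ζ ∈ frontier Win := by
  intro Win Wout hWin hWout φ hφd hφout hφcl hφfr
  obtain ⟨ζ₀, hζ₀b, hζ₀f⟩ := hφfr
  have hθc : Continuous θ := hθ.continuous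
  set ψ : ℂ → Y := fun ζ => (φ ζ).1 with hψdef
  set v : ℂ → ℝ := fun ζ => θ (ψ ζ) with hvdef
  have hIint : interior I = Ioo aI bI := by rw [hI, interior_Icc]
  have hWinOpen : IsOpen Win := by
    rw [hWin]
    have heq : {p : Y × ℂ | θ p.1 ∈ interior I ∧
        0 < (p.2 * Complex.exp (-(Complex.I * (θ p.1 : ℂ)))).re}
        = ((fun p : Y × ℂ => θ p.1) ⁻¹' interior I) ∩
          ((fun p : Y × ℂ => (p.2 * Complex.exp (-(Complex.I * (θ p.1 : ℂ)))).re) ⁻¹' Ioi 0) := by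
      ext p; simp [mem_Ioi, and_comm]
    rw [heq]
    refine IsOpen.inter (isOpen_interior.preimage (hθc.comp continuous_fst))
      (isOpen_Ioi.preimage ?_)
    apply Complex.continuous_re.comp
    apply continuous_snd.mul
    apply Complex.continuous_exp.comp
    apply Continuous.neg
    exact continuous_const.mul (Complex.continuous_ofReal.comp (hθc.comp continuous_fst))
  have hclsub : closure Win ⊆ {p : Y × ℂ | θ p.1 ∈ Icc aI bI} := by
    apply closure_minimal
    · rw [hWin]
      intro p hp
      exact Ioo_subset_Icc_self (hIint ▸ hp.1)
    · exact isClosed_Icc.preimage (hθc.comp continuous_fst)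
  have hvI : ∀ ζ ∈ ball (0:ℂ) 1, v ζ ∈ Icc aI bI := fun ζ hζ => hclsub (hφcl ζ hζ)
  have hmemWin : ∀ ζ ∈ ball (0:ℂ) 1, (φ ζ ∈ Win ↔ v ζ ∈ Ioo aI bI) := by
    intro ζ hζ
    rw [hWin]
    constructor
    · intro h
      exact hIint ▸ h.1
    · intro h
      have hout := hφout ζ hζ
      rw [hWout] at hout
      exact ⟨hIint ▸ h, hout.2⟩
  have hζ₀notin : φ ζ₀ ∉ Win := by
    rw [hWinOpen.frontier_eq] at hζ₀f
    exact hζ₀f.2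
  have hnI : v ζ₀ ∉ Ioo aI bI := fun h => hζ₀notin ((hmemWin ζ₀ hζ₀b).2 h)
  have hIcc := hvI ζ₀ hζ₀b
  have hcext : v ζ₀ = aI ∨ v ζ₀ = bI := by
    rcases eq_or_lt_of_le hIcc.1 with h | h
    · exact Or.inl h.symm
    rcases eq_or_lt_of_le hIcc.2 with h' | h'
    · exact Or.inr h'
    exact absurd ⟨h, h'⟩ hnI
  -- ψ is MDifferentiable on the ball
  have hψm : ∀ ζ' ∈ ball (0:ℂ) 1, MDifferentiableAt 𝓘(ℂ) 𝓘(ℂ) ψ ζ' := fun ζ' h =>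
    (hφd.mdifferentiableAt (isOpen_ball.mem_nhds h)).fst
  -- local constancy at local extrema
  have hloc : ∀ ζ₁ ∈ ball (0:ℂ) 1, (IsLocalMax v ζ₁ ∨ IsLocalMin v ζ₁) →
      ∀ᶠ ζ' in 𝓝 ζ₁, v ζ' = v ζ₁ := by
    intro ζ₁ hζ₁ hext
    set p := ψ ζ₁ with hpdef
    set e := extChartAt 𝓘(ℂ) p with hedef
    have hh := hθ p
    obtain ⟨r, hr, hrsub, H, hHd, hHre⟩ := exists_conjugate
      (isOpen_extChartAt_target (I := 𝓘(ℂ)) p) hh.1 hh.2 (mem_extChartAt_target (I := 𝓘(ℂ)) p)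
    have hψcont : ContinuousAt ψ ζ₁ := (hψm ζ₁ hζ₁).continuousAt
    have hev2 : ∀ᶠ ζ' in 𝓝 ζ₁, ψ ζ' ∈ e.source :=
      hψcont.eventually_mem
        ((isOpen_extChartAt_source (I := 𝓘(ℂ)) p).mem_nhds (mem_extChartAt_source (I := 𝓘(ℂ)) p))
    set g : ℂ → ℂ := fun ζ' => e (ψ ζ') with hgdef
    have hgc : ContinuousAt g ζ₁ := (continuousAt_extChartAt (I := 𝓘(ℂ)) p).comp hψcont
    have hev3 : ∀ᶠ ζ' in 𝓝 ζ₁, g ζ' ∈ ball (e p) r :=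
      hgc.eventually_mem (isOpen_ball.mem_nhds (mem_ball_self hr))
    have hgd : ∀ᶠ ζ' in 𝓝 ζ₁, DifferentiableAt ℂ g ζ' := by
      filter_upwards [isOpen_ball.mem_nhds hζ₁, hev2] with ζ' h1 h2
      have h2' : ψ ζ' ∈ (chartAt ℂ p).source := by
        rwa [hedef, extChartAt_source] at h2
      have hm : MDifferentiableAt 𝓘(ℂ) 𝓘(ℂ) g ζ' :=
        ((contMDiffAt_extChartAt' (n := ⊤) h2').mdifferentiableAt (by simp)).comp ζ' (hψm ζ' h1)
      exact hm.differentiableAt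
    have hveq : ∀ᶠ ζ' in 𝓝 ζ₁, v ζ' = (H (g ζ')).re := by
      filter_upwards [hev2, hev3] with ζ' h2 h3
      rw [hHre _ h3, hvdef]
      simp only
      rw [e.left_inv h2]
    have hGd : ∀ᶠ ζ' in 𝓝 ζ₁, DifferentiableAt ℂ (fun ζ' => H (g ζ')) ζ' := by
      filter_upwards [hgd, hev3] with ζ' h h3
      exact (hHd _ h3).comp ζ' h
    have hG1 : (H (g ζ₁)).re = v ζ₁ := hveq.self_of_nhds.symm
    have hGext : IsLocalMax (fun ζ' => (H (g ζ')).re) ζ₁ ∨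
        IsLocalMin (fun ζ' => (H (g ζ')).re) ζ₁ := by
      rcases hext with hmax | hmin
      · left
        have hm : ∀ᶠ ζ' in 𝓝 ζ₁, v ζ' ≤ v ζ₁ := hmax
        show ∀ᶠ ζ' in 𝓝 ζ₁, (H (g ζ')).re ≤ (H (g ζ₁)).re
        filter_upwards [hm, hveq] with ζ' h hv
        rw [← hv, hG1]
        exact h
      · right
        have hm : ∀ᶠ ζ' in 𝓝 ζ₁, v ζ₁ ≤ v ζ' := hmin
        show ∀ᶠ ζ' in 𝓝 ζ₁, (H (g ζ₁)).re ≤ (H (g ζ')).re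
        filter_upwards [hm, hveq] with ζ' h hv
        rw [← hv, hG1]
        exact h
    have hcst := re_loc_const hGd hGext
    filter_upwards [hcst, hveq] with ζ' h hv
    rw [hv, h, hG1]
  -- extrema are global
  have hglob : ∀ ζ₁ ∈ ball (0:ℂ) 1, v ζ₁ = v ζ₀ → (IsLocalMax v ζ₁ ∨ IsLocalMin v ζ₁) := by
    intro ζ₁ hb hv
    rcases hcext with h | h
    · right
      show ∀ᶠ ζ' in 𝓝 ζ₁, v ζ₁ ≤ v ζ'
      filter_upwards [isOpen_ball.mem_nhds hb] with ζ' h'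
      rw [hv, h]
      exact (hvI ζ' h').1
    · left
      show ∀ᶠ ζ' in 𝓝 ζ₁, v ζ' ≤ v ζ₁
      filter_upwards [isOpen_ball.mem_nhds hb] with ζ' h'
      rw [hv, h]
      exact (hvI ζ' h').2
  -- clopen argument
  set u : Set ℂ := {ζ' | ∃ O : Set ℂ, IsOpen O ∧ ζ' ∈ O ∧ ∀ x ∈ O ∩ ball (0:ℂ) 1, v x = v ζ₀}
    with hudef
  have hu_open : IsOpen u := by
    rw [isOpen_iff_mem_nhds]
    rintro x ⟨O, hO, hxO, hOc⟩
    exact mem_of_superset (hO.mem_nhds hxO) (fun y hy => ⟨O, hO, hy, hOc⟩)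
  have hmemu : ∀ ζ₁ ∈ ball (0:ℂ) 1, v ζ₁ = v ζ₀ → ζ₁ ∈ u := by
    intro ζ₁ hb hv
    obtain ⟨O, hOsub, hO, hxO⟩ := _root_.eventually_nhds_iff.1 (hloc ζ₁ hb (hglob ζ₁ hb hv))
    exact ⟨O, hO, hxO, fun x hx => (hOsub x hx.1).trans hv⟩
  have hvcont : ContinuousOn v (ball (0:ℂ) 1) :=
    hθc.comp_continuousOn (continuous_fst.comp_continuousOn hφd.continuousOn)
  set w : Set ℂ := ball (0:ℂ) 1 ∩ v ⁻¹' ({v ζ₀}ᶜ) with hwdef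
  have hw_open : IsOpen w :=
    hvcont.isOpen_inter_preimage isOpen_ball (isOpen_compl_iff.2 isClosed_singleton)
  have hpc : IsPreconnected (ball (0:ℂ) 1) := (convex_ball (0:ℂ) 1).isPreconnected
  have hfin : ∀ ζ ∈ ball (0:ℂ) 1, v ζ = v ζ₀ := by
    intro ζ hζ
    by_contra hne
    have hsub : ball (0:ℂ) 1 ⊆ u ∪ w := by
      intro x hx
      by_cases hvx : v x = v ζ₀
      · exact Or.inl (hmemu x hx hvx)
      · exact Or.inr ⟨hx, hvx⟩
    have h1 : (ball (0:ℂ) 1 ∩ u).Nonempty := ⟨ζ₀, hζ₀b, hmemu ζ₀ hζ₀b rfl⟩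
    have h2 : (ball (0:ℂ) 1 ∩ w).Nonempty := ⟨ζ, hζ, hζ, hne⟩
    obtain ⟨x, hxb, hxu, hxw⟩ := hpc u w hu_open hw_open hsub h1 h2
    obtain ⟨O, hO, hxO, hOc⟩ := hxu
    exact hxw.2 (hOc x ⟨hxO, hxb⟩)
  intro ζ hζ
  have hvζ : v ζ = v ζ₀ := hfin ζ hζ
  have hnotin : φ ζ ∉ Win := by
    intro h
    have hmem := (hmemWin ζ hζ).1 h
    rw [hvζ] at hmem
    exact hnI hmem
  rw [hWinOpen.frontier_eq]
  exact ⟨hφcl ζ hζ, hnotin⟩
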